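/- arXiv:2503.08155 — 2 statements merged into one kernel-verified Lean document; each statement's English description precedes it below -/
import Mathlib

section
/- Suppose ℓ satisfies the Metric Loss Assumption and Y is a finite label set. Suppose the Close Conditionals assumption CC(κ) does NOT hold for the hypothesis class H, i.e., for every f ∈ H, κ ≤ R_p(f) + max_{y ∈ Y} W_{1,ℓ}(f#p_{x|y}(·|y), f#q_{x|y}(·|y)). Then for every f ∈ H, κ · q_y(y_min) ≤ R_p(f) · q_y(y_max) + R_q(f) + R_r(f), where y_min = argmin_y q_y(y), y_max = argmax_y q_y(y), and r is the probability measure on X × Y given by r(x, y) = p_{x|y}(x|y) · q_y(y). -/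
open MeasureTheory ProbabilityTheory

/-- A coupling of `μ` and `ν`: a joint measure on the product with the given marginals. -/
def IsCoupling {A B : Type*} [MeasurableSpace A] [MeasurableSpace B]
    (γ : Measure (A × B)) (μ : Measure A) (ν : Measure B) : Prop :=
  γ.map Prod.fst = μ ∧ γ.map Prod.snd = ν

/-- The `α`-Wasserstein distance between `μ` and `ν` with cost function `c`:
`W_{α,c}(μ,ν) = (inf_{γ ∈ Γ(μ,ν)} ∫ c^α dγ)^{1/α}`. -/
noncomputable def Wass {A B : Type*} [MeasurableSpace A] [MeasurableSpace B]
    (α : ℝ) (c : A × B → ℝ) (μ : Measure A) (ν : Measure B) : ℝ :=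
  sInf { r | ∃ γ : Measure (A × B), IsCoupling γ μ ν ∧ r = ∫ z, c z ^ α ∂γ } ^ (1 / α)

/-- The 1-Wasserstein distance between `μ` and `ν` with cost function `c`. -/
noncomputable def W1 {A B : Type*} [MeasurableSpace A] [MeasurableSpace B]
    (c : A × B → ℝ) (μ : Measure A) (ν : Measure B) : ℝ :=
  sInf { r | ∃ γ : Measure (A × B), IsCoupling γ μ ν ∧ r = ∫ z, c z ∂γ }

/-- The risk of classifier `f` under joint distribution `p`, w.r.t. loss `ℓ`. -/
noncomputable def risk {X Y : Type*} [MeasurableSpace X] [MeasurableSpace Y]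
    (ℓ : Y × Y → ℝ) (f : X → Y) (p : Measure (X × Y)) : ℝ :=
  ∫ z, ℓ (f z.1, z.2) ∂p

/-- `f#p` : pushforward of a joint measure `p` under `(x, y) ↦ (f x, y)`. -/
noncomputable def jmap {X Y : Type*} [MeasurableSpace X] [MeasurableSpace Y]
    (f : X → Y) (p : Measure (X × Y)) : Measure (Y × Y) :=
  p.map (fun z => (f z.1, z.2))

instance jmap.instIsFiniteMeasure {X Y : Type*} [MeasurableSpace X] [MeasurableSpace Y]
    (f : X → Y) (p : Measure (X × Y)) [IsFiniteMeasure p] : IsFiniteMeasure (jmap f p) := by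
  unfold jmap; infer_instance

/-!
For each label `y`, the product coupling of `f#p_{x|y}` and `f#q_{x|y}` together with the
triangle inequality through `y` bounds `W₁` by the sum of the two conditional risks at `y`.
Weighted by `q_y(y)` these are summands of `R_r(f)` and `R_q(f)`, so
`q_y(y) · W₁ ≤ R_q(f) + R_r(f)` for every label. Multiply the failure of `CC(κ)` by
`q_y(y_min)` and use `q_y(y_min) ≤ q_y(y)` for every `y`, in particular for `y_max`.
-/

section Coupling

variable {A B : Type*} [MeasurableSpace A] [MeasurableSpace B]

lemma isCoupling_prod (μ : Measure A) (ν : Measure B)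
    [IsProbabilityMeasure μ] [IsProbabilityMeasure ν] : IsCoupling (μ.prod ν) μ ν :=
  ⟨by simp, by simp⟩

lemma W1_nonneg {c : A × B → ℝ} (hc : ∀ z, 0 ≤ c z) (μ : Measure A) (ν : Measure B) :
    0 ≤ W1 c μ ν :=
  Real.sInf_nonneg <| by
    rintro r ⟨γ, -, rfl⟩
    exact integral_nonneg hc

lemma W1_le_integral_prod {c : A × B → ℝ} (hc : ∀ z, 0 ≤ c z) (μ : Measure A) (ν : Measure B)
    [IsProbabilityMeasure μ] [IsProbabilityMeasure ν] :
    W1 c μ ν ≤ ∫ z, c z ∂(μ.prod ν) := by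
  refine csInf_le ⟨0, ?_⟩ ⟨μ.prod ν, isCoupling_prod μ ν, rfl⟩
  rintro r ⟨γ, -, rfl⟩
  exact integral_nonneg hc

end Coupling

lemma map_swap_compProd_condKernel {X Y : Type*} [MeasurableSpace X] [StandardBorelSpace X]
    [Nonempty X] [MeasurableSpace Y] (ρ : Measure (X × Y)) [IsFiniteMeasure ρ] :
    ((ρ.map Prod.snd) ⊗ₘ (ρ.map Prod.swap).condKernel).map Prod.swap = ρ := by
  have hdis := Measure.disintegrate (ρ.map Prod.swap) (ρ.map Prod.swap).condKernel
  rw [Measure.fst_map_swap] at hdis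
  rw [← Measure.snd, hdis, Measure.map_map measurable_swap measurable_swap, Prod.swap_swap_eq,
    Measure.map_id]

section FiniteLabels

variable {X Y : Type*} [MeasurableSpace X] [MeasurableSpace Y] [Fintype Y]
  [MeasurableSingletonClass Y] {ℓ : Y × Y → ℝ}

lemma W1_le_integral_add_integral (hnonneg : ∀ y y' : Y, 0 ≤ ℓ (y, y'))
    (htri : ∀ y₁ y₂ y₃ : Y, ℓ (y₁, y₃) ≤ ℓ (y₁, y₂) + ℓ (y₂, y₃))
    (μ ν : Measure Y) [IsProbabilityMeasure μ] [IsProbabilityMeasure ν] (y : Y) :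
    W1 ℓ μ ν ≤ ∫ a, ℓ (a, y) ∂μ + ∫ b, ℓ (y, b) ∂ν :=
  calc W1 ℓ μ ν ≤ ∫ z, ℓ z ∂(μ.prod ν) := W1_le_integral_prod (fun z => hnonneg z.1 z.2) μ ν
    _ ≤ ∫ z : Y × Y, (ℓ (z.1, y) + ℓ (y, z.2)) ∂(μ.prod ν) :=
      integral_mono .of_finite .of_finite fun z => htri z.1 y z.2
    _ = ∫ a, ℓ (a, y) ∂μ + ∫ b, ℓ (y, b) ∂ν := by
      rw [integral_add .of_finite .of_finite, integral_fun_fst (fun a => ℓ (a, y)),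
        integral_fun_snd (fun b => ℓ (y, b))]
      simp

lemma W1_map_le_integral_add_integral (hsymm : ∀ y y' : Y, ℓ (y, y') = ℓ (y', y))
    (hnonneg : ∀ y y' : Y, 0 ≤ ℓ (y, y'))
    (htri : ∀ y₁ y₂ y₃ : Y, ℓ (y₁, y₃) ≤ ℓ (y₁, y₂) + ℓ (y₂, y₃))
    {f : X → Y} (hf : Measurable f) (μ ν : Measure X) [IsProbabilityMeasure μ]
    [IsProbabilityMeasure ν] (y : Y) :
    W1 ℓ (μ.map f) (ν.map f) ≤ ∫ x, ℓ (f x, y) ∂μ + ∫ x, ℓ (f x, y) ∂ν := by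
  have : IsProbabilityMeasure (μ.map f) := Measure.isProbabilityMeasure_map hf.aemeasurable
  have : IsProbabilityMeasure (ν.map f) := Measure.isProbabilityMeasure_map hf.aemeasurable
  have hW := W1_le_integral_add_integral hnonneg htri (μ.map f) (ν.map f) y
  rwa [integral_map hf.aemeasurable Measurable.of_discrete.aestronglyMeasurable,
    integral_map hf.aemeasurable Measurable.of_discrete.aestronglyMeasurable,
    funext fun x => hsymm y (f x)] at hW

lemma risk_map_swap_compProd {f : X → Y} (hf : Measurable f) (μ : Measure Y)
    [IsFiniteMeasure μ] (κ : Kernel Y X) [IsMarkovKernel κ] :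
    risk ℓ f ((μ ⊗ₘ κ).map Prod.swap) = ∑ y, μ.real {y} * ∫ x, ℓ (f x, y) ∂κ y := by
  have hg : Measurable fun w : Y × X => (f w.2, w.1) :=
    (hf.comp measurable_snd).prodMk measurable_fst
  have hint : Integrable (fun w : Y × X => ℓ (f w.2, w.1)) (μ ⊗ₘ κ) :=
    Integrable.comp_measurable (g := ℓ) .of_finite hg
  have hm : Measurable fun z : X × Y => ℓ (f z.1, z.2) :=
    Measurable.of_discrete.comp (hf.prodMap measurable_id)
  rw [risk, integral_map measurable_swap.aemeasurable hm.aestronglyMeasurable]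
  simp only [Prod.fst_swap, Prod.snd_swap]
  rw [Measure.integral_compProd hint, integral_fintype .of_finite]
  rfl

lemma measureReal_mul_W1_le_risk_add_risk (hsymm : ∀ y y' : Y, ℓ (y, y') = ℓ (y', y))
    (hnonneg : ∀ y y' : Y, 0 ≤ ℓ (y, y'))
    (htri : ∀ y₁ y₂ y₃ : Y, ℓ (y₁, y₃) ≤ ℓ (y₁, y₂) + ℓ (y₂, y₃))
    {f : X → Y} (hf : Measurable f) (μ : Measure Y) [IsFiniteMeasure μ]
    (κ₁ κ₂ : Kernel Y X) [IsMarkovKernel κ₁] [IsMarkovKernel κ₂] (y : Y) :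
    μ.real {y} * W1 ℓ ((κ₁ y).map f) ((κ₂ y).map f) ≤
      risk ℓ f ((μ ⊗ₘ κ₁).map Prod.swap) + risk ℓ f ((μ ⊗ₘ κ₂).map Prod.swap) := by
  have hterm (κ : Kernel Y X) (y' : Y) : 0 ≤ μ.real {y'} * ∫ x, ℓ (f x, y') ∂κ y' :=
    mul_nonneg measureReal_nonneg (integral_nonneg fun _ => hnonneg _ _)
  rw [risk_map_swap_compProd hf, risk_map_swap_compProd hf]
  calc μ.real {y} * W1 ℓ ((κ₁ y).map f) ((κ₂ y).map f)
      ≤ μ.real {y} * (∫ x, ℓ (f x, y) ∂κ₁ y + ∫ x, ℓ (f x, y) ∂κ₂ y) :=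
        mul_le_mul_of_nonneg_left
          (W1_map_le_integral_add_integral hsymm hnonneg htri hf _ _ y) measureReal_nonneg
    _ = μ.real {y} * ∫ x, ℓ (f x, y) ∂κ₁ y + μ.real {y} * ∫ x, ℓ (f x, y) ∂κ₂ y := mul_add _ _ _
    _ ≤ _ := add_le_add
        (Finset.single_le_sum (fun y' _ => hterm κ₁ y') (Finset.mem_univ y))
        (Finset.single_le_sum (fun y' _ => hterm κ₂ y') (Finset.mem_univ y))

end FiniteLabels

theorem statement10_general {X Y : Type*} [MeasurableSpace X] [StandardBorelSpace X] [Nonempty X]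
    [MeasurableSpace Y] [Fintype Y] [MeasurableSingletonClass Y]
    (ℓ : Y × Y → ℝ)
    (hsymm : ∀ y y' : Y, ℓ (y, y') = ℓ (y', y))
    (hnonneg : ∀ y y' : Y, 0 ≤ ℓ (y, y'))
    (htri : ∀ y₁ y₂ y₃ : Y, ℓ (y₁, y₃) ≤ ℓ (y₁, y₂) + ℓ (y₂, y₃))
    (p q : Measure (X × Y)) [IsProbabilityMeasure p] [IsProbabilityMeasure q]
    (H : Set (X → Y)) (hH : ∀ f ∈ H, Measurable f)
    (κ : ℝ)
    (hnotCC : ∀ f ∈ H, κ ≤ risk ℓ f p +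
      ⨆ y : Y, W1 ℓ (((p.map Prod.swap).condKernel y).map f)
        (((q.map Prod.swap).condKernel y).map f))
    (ymin ymax : Y)
    (hymin : ∀ y : Y, (q.map Prod.snd) {ymin} ≤ (q.map Prod.snd) {y}) :
    ∀ f ∈ H,
      κ * ((q.map Prod.snd) {ymin}).toReal ≤
        risk ℓ f p * ((q.map Prod.snd) {ymax}).toReal + risk ℓ f q +
          risk ℓ f (((q.map Prod.snd) ⊗ₘ (p.map Prod.swap).condKernel).map Prod.swap) := by
  intro f hf
  set qY := q.map Prod.snd
  set r := (qY ⊗ₘ (p.map Prod.swap).condKernel).map Prod.swap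
  set W := fun y => W1 ℓ (((p.map Prod.swap).condKernel y).map f)
    (((q.map Prod.swap).condKernel y).map f)
  have hmin_le (y : Y) : qY.real {ymin} ≤ qY.real {y} :=
    ENNReal.toReal_mono (measure_ne_top _ _) (hymin y)
  have hlabel (y : Y) : qY.real {ymin} * W y ≤ risk ℓ f q + risk ℓ f r := by
    have h := measureReal_mul_W1_le_risk_add_risk hsymm hnonneg htri (hH f hf) qY
      (p.map Prod.swap).condKernel (q.map Prod.swap).condKernel y
    rw [map_swap_compProd_condKernel, add_comm] at h
    have hW : 0 ≤ W y := W1_nonneg (fun z => hnonneg z.1 z.2) _ _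
    exact (mul_le_mul_of_nonneg_right (hmin_le y) hW).trans h
  have : Nonempty Y := ⟨ymin⟩
  have hsup : qY.real {ymin} * ⨆ y, W y ≤ risk ℓ f q + risk ℓ f r := by
    rw [Real.mul_iSup_of_nonneg measureReal_nonneg]
    exact ciSup_le hlabel
  have hrisk_p : 0 ≤ risk ℓ f p := integral_nonneg fun _ => hnonneg _ _
  calc κ * qY.real {ymin} ≤ (risk ℓ f p + ⨆ y, W y) * qY.real {ymin} :=
        mul_le_mul_of_nonneg_right (hnotCC f hf) measureReal_nonneg
    _ = risk ℓ f p * qY.real {ymin} + qY.real {ymin} * ⨆ y, W y := by ring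
    _ ≤ _ := by
      rw [add_assoc]
      exact add_le_add (mul_le_mul_of_nonneg_left (hmin_le ymax) hrisk_p) hsup

theorem statement10 {X Y : Type*} [MeasurableSpace X] [StandardBorelSpace X] [Nonempty X]
    [MeasurableSpace Y] [Fintype Y] [MeasurableSingletonClass Y] [Nonempty Y]
    (ℓ : Y × Y → ℝ) (hℓmeas : Measurable ℓ)
    (hsymm : ∀ y y' : Y, ℓ (y, y') = ℓ (y', y))
    (hnonneg : ∀ y y' : Y, 0 ≤ ℓ (y, y'))
    (htri : ∀ y₁ y₂ y₃ : Y, ℓ (y₁, y₃) ≤ ℓ (y₁, y₂) + ℓ (y₂, y₃))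
    (hid : ∀ y y' : Y, ℓ (y, y') = 0 ↔ y = y')
    (p q : Measure (X × Y)) [IsProbabilityMeasure p] [IsProbabilityMeasure q]
    (H : Set (X → Y)) (hH : ∀ f ∈ H, Measurable f)
    (κ : ℝ) (hκ : 0 < κ)
    (hnotCC : ∀ f ∈ H, κ ≤ risk ℓ f p +
      ⨆ y : Y, W1 ℓ (((p.map Prod.swap).condKernel y).map f)
        (((q.map Prod.swap).condKernel y).map f))
    (ymin ymax : Y)
    (hymin : ∀ y : Y, (q.map Prod.snd) {ymin} ≤ (q.map Prod.snd) {y})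
    (hymax : ∀ y : Y, (q.map Prod.snd) {y} ≤ (q.map Prod.snd) {ymax}) :
    ∀ f ∈ H,
      κ * ((q.map Prod.snd) {ymin}).toReal ≤
        risk ℓ f p * ((q.map Prod.snd) {ymax}).toReal + risk ℓ f q +
          risk ℓ f (((q.map Prod.snd) ⊗ₘ (p.map Prod.swap).condKernel).map Prod.swap) :=
  statement10_general ℓ hsymm hnonneg htri p q H hH κ hnotCC ymin ymax hymin
end

section
/- Suppose ℓ satisfies the Metric Loss Assumption, is bounded above by L > 0, every f in the hypothesis class H is a measurable surjective function, and the label marginals coincide: p_y = q_y. If CC(κ) holds for H for some κ > 0, then LJE(2κ) holds for H. -/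
/-!
For each label `y`, the map `a ↦ ℓ (a, y)` is `1`-Lipschitz for the metric `ℓ`, so its expectation
under `f#q_{x|y}` exceeds its expectation under `f#p_{x|y}` by at most `W₁(f#p_{x|y}, f#q_{x|y})`
(the easy half of Kantorovich–Rubinstein duality). Integrating over the common label marginal gives
`R_q(f) ≤ R_p(f) + max_y W₁`, hence `R_p(f) + R_q(f) ≤ 2 (R_p(f) + max_y W₁) < 2κ`.
-/

open MeasureTheory ProbabilityTheory

section Coupling

variable {A B : Type*} [MeasurableSpace A] [MeasurableSpace B]

lemma IsCoupling.isProbabilityMeasure {γ : Measure (A × B)} {μ : Measure A} {ν : Measure B}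
    [IsProbabilityMeasure μ] (hγ : IsCoupling γ μ ν) : IsProbabilityMeasure γ :=
  ⟨by simpa [Measure.map_apply measurable_fst MeasurableSet.univ] using
    congrArg (· Set.univ) hγ.1⟩

lemma integral_sub_integral_le_W1 [Finite A] [Finite B] [MeasurableSingletonClass A]
    [MeasurableSingletonClass B] {c : A × B → ℝ} {g : A → ℝ} {h : B → ℝ}
    (hgh : ∀ a b, h b - g a ≤ c (a, b)) (μ : Measure A) (ν : Measure B)
    [IsProbabilityMeasure μ] [IsProbabilityMeasure ν] :
    ∫ b, h b ∂ν - ∫ a, g a ∂μ ≤ W1 c μ ν := by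
  refine le_csInf ⟨_, μ.prod ν, isCoupling_prod μ ν, rfl⟩ ?_
  rintro r ⟨γ, hγ, rfl⟩
  have := hγ.isProbabilityMeasure
  rw [← hγ.1, ← hγ.2, integral_map measurable_snd.aemeasurable .of_discrete,
    integral_map measurable_fst.aemeasurable .of_discrete, ← integral_sub .of_finite .of_finite]
  exact integral_mono .of_finite .of_finite fun z => hgh z.1 z.2

end Coupling

section Risk

variable {X Y : Type*} [MeasurableSpace X] [StandardBorelSpace X] [Nonempty X]
  [MeasurableSpace Y] [Finite Y] [MeasurableSingletonClass Y]

lemma risk_eq_integral_condKernel (ℓ : Y × Y → ℝ) {f : X → Y} (hf : Measurable f)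
    (r : Measure (X × Y)) [IsFiniteMeasure r] :
    risk ℓ f r = ∫ y, ∫ a, ℓ (a, y) ∂(((r.map Prod.swap).condKernel y).map f) ∂r.snd := by
  have hφ : Measurable fun w : Y × X => (f w.2, w.1) :=
    (hf.comp measurable_snd).prodMk measurable_fst
  have hint : Integrable (fun w : Y × X => ℓ (f w.2, w.1)) (r.map Prod.swap) :=
    (integrable_map_measure .of_discrete hφ.aemeasurable).1 .of_finite
  have hswap : risk ℓ f r = ∫ w, ℓ (f w.2, w.1) ∂(r.map Prod.swap) :=
    (integral_map measurable_swap.aemeasurable hint.1).symm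
  rw [hswap, ← Measure.integral_condKernel hint, Measure.fst_map_swap]
  simp only [integral_map hf.aemeasurable .of_discrete]

lemma risk_le_risk_add_iSup_W1 (ℓ : Y × Y → ℝ) (hsymm : ∀ y y' : Y, ℓ (y, y') = ℓ (y', y))
    (htri : ∀ y₁ y₂ y₃ : Y, ℓ (y₁, y₃) ≤ ℓ (y₁, y₂) + ℓ (y₂, y₃)) {f : X → Y}
    (hf : Measurable f) (p q : Measure (X × Y)) [IsProbabilityMeasure p]
    [IsProbabilityMeasure q] (hmarg : p.snd = q.snd) :
    risk ℓ f q ≤ risk ℓ f p + ⨆ y : Y, W1 ℓ (((p.map Prod.swap).condKernel y).map f)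
      (((q.map Prod.swap).condKernel y).map f) := by
  set S := ⨆ y : Y, W1 ℓ (((p.map Prod.swap).condKernel y).map f)
      (((q.map Prod.swap).condKernel y).map f)
  have hcond : ∀ y, ∫ a, ℓ (a, y) ∂(((q.map Prod.swap).condKernel y).map f) ≤
      ∫ a, ℓ (a, y) ∂(((p.map Prod.swap).condKernel y).map f) + S := fun y => by
    have := Measure.isProbabilityMeasure_map (μ := (p.map Prod.swap).condKernel y) hf.aemeasurable
    have := Measure.isProbabilityMeasure_map (μ := (q.map Prod.swap).condKernel y) hf.aemeasurable
    have hlip : ∀ a b, ℓ (b, y) - ℓ (a, y) ≤ ℓ (a, b) := fun a b => by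
      linarith [htri b a y, hsymm b a]
    have hW := integral_sub_integral_le_W1 hlip (((p.map Prod.swap).condKernel y).map f)
      (((q.map Prod.swap).condKernel y).map f)
    have hWS := le_ciSup (Set.finite_range fun y => W1 ℓ
      (((p.map Prod.swap).condKernel y).map f) (((q.map Prod.swap).condKernel y).map f)).bddAbove y
    linarith
  rw [risk_eq_integral_condKernel ℓ hf p, risk_eq_integral_condKernel ℓ hf q, ← hmarg]
  calc _ ≤ ∫ y, (∫ a, ℓ (a, y) ∂(((p.map Prod.swap).condKernel y).map f) + S) ∂p.snd :=
        integral_mono .of_finite .of_finite hcond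
    _ = _ := by
        rw [integral_add .of_finite (integrable_const S), integral_const]
        simp

end Risk

theorem statement12_general {X Y : Type*} [MeasurableSpace X] [StandardBorelSpace X] [Nonempty X]
    [MeasurableSpace Y] [Fintype Y] [MeasurableSingletonClass Y]
    (ℓ : Y × Y → ℝ)
    (hsymm : ∀ y y' : Y, ℓ (y, y') = ℓ (y', y))
    (hnonneg : ∀ y y' : Y, 0 ≤ ℓ (y, y'))
    (htri : ∀ y₁ y₂ y₃ : Y, ℓ (y₁, y₃) ≤ ℓ (y₁, y₂) + ℓ (y₂, y₃))
    (p q : Measure (X × Y)) [IsProbabilityMeasure p] [IsProbabilityMeasure q]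
    (H : Set (X → Y)) (hH : ∀ f ∈ H, Measurable f ∧ Function.Surjective f)
    (hmarg : p.map Prod.snd = q.map Prod.snd)
    (κ : ℝ)
    (hCC : ∃ f ∈ H, risk ℓ f p +
      (⨆ y : Y, W1 ℓ (((p.map Prod.swap).condKernel y).map f)
        (((q.map Prod.swap).condKernel y).map f)) < κ) :
    ∃ f ∈ H, risk ℓ f p + risk ℓ f q < 2 * κ := by
  obtain ⟨f, hfH, hCC⟩ := hCC
  refine ⟨f, hfH, ?_⟩
  have hqp := risk_le_risk_add_iSup_W1 ℓ hsymm htri (hH f hfH).1 p q hmarg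
  have hW1 : 0 ≤ ⨆ y : Y, W1 ℓ (((p.map Prod.swap).condKernel y).map f)
      (((q.map Prod.swap).condKernel y).map f) :=
    Real.iSup_nonneg fun _ => W1_nonneg (fun z => hnonneg z.1 z.2) _ _
  linarith

theorem statement12 {X Y : Type*} [MeasurableSpace X] [StandardBorelSpace X] [Nonempty X]
    [MeasurableSpace Y] [Fintype Y] [MeasurableSingletonClass Y] [Nonempty Y]
    (ℓ : Y × Y → ℝ) (hℓmeas : Measurable ℓ)
    (hsymm : ∀ y y' : Y, ℓ (y, y') = ℓ (y', y))
    (hnonneg : ∀ y y' : Y, 0 ≤ ℓ (y, y'))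
    (htri : ∀ y₁ y₂ y₃ : Y, ℓ (y₁, y₃) ≤ ℓ (y₁, y₂) + ℓ (y₂, y₃))
    (hid : ∀ y y' : Y, ℓ (y, y') = 0 ↔ y = y')
    (L : ℝ) (hL : 0 < L) (hbound : ∀ y y' : Y, ℓ (y, y') ≤ L)
    (p q : Measure (X × Y)) [IsProbabilityMeasure p] [IsProbabilityMeasure q]
    (H : Set (X → Y)) (hH : ∀ f ∈ H, Measurable f ∧ Function.Surjective f)
    (hmarg : p.map Prod.snd = q.map Prod.snd)
    (κ : ℝ) (hκ : 0 < κ)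
    (hCC : ∃ f ∈ H, risk ℓ f p +
      (⨆ y : Y, W1 ℓ (((p.map Prod.swap).condKernel y).map f)
        (((q.map Prod.swap).condKernel y).map f)) < κ) :
    ∃ f ∈ H, risk ℓ f p + risk ℓ f q < 2 * κ :=
  statement12_general ℓ hsymm hnonneg htri p q H hH hmarg κ hCC
end
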